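/- arXiv:1009.4890 — 2 statements merged into one kernel-verified Lean document; each statement's English description precedes it below -/
import Mathlib

section
/- The weak order on SYT_n restricts to segments: if S ≤_weak T in SYT_n, then st(S_[i,j]) ≤_weak st(T_[i,j]) in SYT_{j−i+1} for all 1 ≤ i < j ≤ n. -/
/-! Basic combinatorial setup: permutations in one-line notation as lists of
natural numbers, RSK insertion, standard Young tableaux as lists of rows,
the right weak Bruhat order and the weak order on standard Young tableaux. -/

/-- `w` is a permutation of `{1,…,n}` written in one-line notation. -/
def IsPermWord (n : ℕ) (w : List ℕ) : Prop := w.Perm (List.range' 1 n)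

/-- The left inversion set of a word `w` in one-line notation:
pairs `(a,b)` with `a < b` such that `a` occurs to the right of `b` in `w`. -/
def InvL (w : List ℕ) : Set (ℕ × ℕ) :=
  {p | p.1 < p.2 ∧ p.1 ∈ w ∧ p.2 ∈ w ∧ w.idxOf p.2 < w.idxOf p.1}

/-- The right weak Bruhat order, characterized by inclusion of left inversion sets. -/
def wordLE (u w : List ℕ) : Prop := InvL u ⊆ InvL w

/-- Schensted row insertion of a letter `x` into a row:
returns the new row together with the bumped letter, if any. -/
def insertRow : List ℕ → ℕ → List ℕ × Option ℕ
  | [], x => ([x], none)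
  | y :: ys, x =>
    if x < y then (x :: ys, some y)
    else
      let p := insertRow ys x
      (y :: p.1, p.2)

/-- Schensted insertion of a letter into a tableau (given as its list of rows). -/
def insertTab : List (List ℕ) → ℕ → List (List ℕ)
  | [], x => [[x]]
  | r :: rs, x =>
    let p := insertRow r x
    match p.2 with
    | none => p.1 :: rs
    | some y => p.1 :: insertTab rs y

/-- The RSK insertion tableau `I(w)` of a word `w`. -/
def RSK (w : List ℕ) : List (List ℕ) := w.foldl insertTab []

/-- The shape of a tableau: the list of row lengths. -/
def shape (t : List (List ℕ)) : List ℕ := t.map List.length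

/-- `t` is a standard Young tableau with `n` cells: rows strictly increase,
columns strictly increase (in particular row lengths weakly decrease),
there are no empty rows, and the entries are exactly `1,…,n`. -/
def IsSYT (n : ℕ) (t : List (List ℕ)) : Prop :=
  (∀ r ∈ t, r.Pairwise (· < ·)) ∧
  t.Chain' (fun r₁ r₂ => r₂.length ≤ r₁.length ∧ ∀ c < r₂.length, r₁.getD c 0 < r₂.getD c 0) ∧
  (∀ r ∈ t, r ≠ []) ∧
  t.flatten.Perm (List.range' 1 n)

/-- The (row) reading word of a tableau: rows read left to right,
starting from the bottom row. -/
def readWord (t : List (List ℕ)) : List ℕ := t.reverse.flatten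

/-- `st(w_[i,j])`: the subword of `w` consisting of the letters in `[i,j]`,
standardized by subtracting `i-1` from each letter. -/
def restr (w : List ℕ) (i j : ℕ) : List ℕ :=
  (w.filter (fun x => decide (i ≤ x ∧ x ≤ j))).map (fun x => x - (i - 1))

/-- `st(T_[i,j])`: the (standardized) jeu-de-taquin rectification of the
restriction of `T` to the entries in `[i,j]`; the rectification of a skew
tableau is computed as the insertion tableau of its reading word. -/
def restrTab (t : List (List ℕ)) (i j : ℕ) : List (List ℕ) :=
  RSK (restr (readWord t) i j)

/-- The relation generating the weak order on `SYT_n`: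
`S ≤ T` if some `σ` in the Knuth class of `S` and some `τ` in the Knuth class
of `T` satisfy `σ ≤ τ` in the right weak Bruhat order. -/
def tabRel (n : ℕ) (S T : List (List ℕ)) : Prop :=
  ∃ σ τ : List ℕ, IsPermWord n σ ∧ IsPermWord n τ ∧ RSK σ = S ∧ RSK τ = T ∧ wordLE σ τ

/-- Melnikov's weak order on `SYT_n`: the transitive closure of `tabRel`. -/
def tabLE (n : ℕ) (S T : List (List ℕ)) : Prop := Relation.TransGen (tabRel n) S T

/-- Strict weak order on `SYT_n`. -/
def tabLT (n : ℕ) (S T : List (List ℕ)) : Prop := tabLE n S T ∧ S ≠ T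

/-- `S ⋖ T` in the weak order on `SYT_n`. -/
def tabCov (n : ℕ) (S T : List (List ℕ)) : Prop :=
  tabLT n S T ∧ ∀ Q, IsSYT n Q → ¬ (tabLT n S Q ∧ tabLT n Q T)

/-- `S ⋖ T` in the weak order within the subset of `SYT_n` cut out by `P`. -/
def tabCovIn (n : ℕ) (P : List (List ℕ) → Prop) (S T : List (List ℕ)) : Prop :=
  tabLT n S T ∧ ∀ Q, IsSYT n Q → P Q → ¬ (tabLT n S Q ∧ tabLT n Q T)

/-- The left descent set of a permutation word. -/
def DesL (n : ℕ) (w : List ℕ) : Set ℕ :=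
  {i | 1 ≤ i ∧ i < n ∧ w.idxOf (i + 1) < w.idxOf i}

/-- Index of the row of `t` containing the entry `v`. -/
def rowOf (t : List (List ℕ)) (v : ℕ) : ℕ := t.findIdx (fun r => decide (v ∈ r))

/-- The descent set of a standard Young tableau with `n` cells. -/
def DesT (n : ℕ) (t : List (List ℕ)) : Set ℕ :=
  {i | 1 ≤ i ∧ i < n ∧ rowOf t i < rowOf t (i + 1)}

/-- The transpose (conjugate) of a tableau. -/
def transposeTab (t : List (List ℕ)) : List (List ℕ) :=
  (List.range (t.headD []).length).map (fun c => t.filterMap (fun r => r[c]?))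

/-- Schützenberger's evacuation `T^evac`: the insertion tableau of the word
obtained from any word in the Knuth class of `T` (here, its reading word) by
reversing it and complementing each letter `x ↦ n+1-x`. -/
def evacTab (n : ℕ) (t : List (List ℕ)) : List (List ℕ) :=
  RSK (((readWord t).map (fun x => n + 1 - x)).reverse)

/-- Dominance order on partitions (as lists): `domLE l m` iff every partial
sum of `l` is at most the corresponding partial sum of `m`. -/
def domLE (l m : List ℕ) : Prop := ∀ k, (l.take k).sum ≤ (m.take k).sum

/-- The inner subtableau `T_[1,k]` of a standard Young tableau:
the cells with entries `1,…,k`. -/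
def innerTab (k : ℕ) (t : List (List ℕ)) : List (List ℕ) :=
  (t.map (fun r => r.filter (fun x => decide (x ≤ k)))).filter (fun r => !r.isEmpty)

/-- The inner tableau translation map `V_[R,R']`: in a tableau `t` with inner
tableau `R`, replace the subtableau `R` by the same-shape tableau `R'`. -/
def replaceInner (R R' t : List (List ℕ)) : List (List ℕ) :=
  (List.range t.length).map
    (fun r => R'.getD r [] ++ (t.getD r []).drop (R.getD r []).length)

/-- Increase all entries of a tableau by `k`. -/
def shiftTab (k : ℕ) (t : List (List ℕ)) : List (List ℕ) := t.map (List.map (· + k))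

/-- Concatenate two tableaux row by row. -/
def rowCat (S T : List (List ℕ)) : List (List ℕ) :=
  (List.range (max S.length T.length)).map (fun r => S.getD r [] ++ T.getD r [])

/-- `S \ T`: rows obtained by concatenating the rows of `T̄` (entries of `T`
shifted up by `k`) to the right of the rows of `S`, where `S ∈ SYT_k`. -/
def tabUnder (k : ℕ) (S T : List (List ℕ)) : List (List ℕ) := rowCat S (shiftTab k T)

/-- `S / T`: columns obtained by concatenating the columns of `T̄` (entries of
`T` shifted up by `k`) under the columns of `S`, where `S ∈ SYT_k`. -/
def tabOver (k : ℕ) (S T : List (List ℕ)) : List (List ℕ) :=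
  transposeTab (rowCat (transposeTab S) (transposeTab (shiftTab k T)))

/-- Reverse row bumping: replace the largest entry of the row smaller than `x`
by `x`, returning the new row and the entry that was bumped out upward. -/
def revBumpRow : List ℕ → ℕ → List ℕ × ℕ
  | [], x => ([], x)
  | [y], x => if y < x then ([x], y) else ([y], x)
  | y :: z :: ys, x =>
    if z < x then
      let p := revBumpRow (z :: ys) x
      (y :: p.1, p.2)
    else (x :: z :: ys, y)

/-- Reverse insertion of a value `x` upward through a stack of rows
(listed top to bottom, processed bottom to top). -/
def revInsertAux : List (List ℕ) → ℕ → List (List ℕ) × ℕ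
  | [], x => ([], x)
  | r :: rs, x =>
    let p := revInsertAux rs x
    let q := revBumpRow r p.2
    (q.1 :: p.1, q.2)

/-- `T↑A` and `η(T↑A)`: reverse RSK insertion applied to the tableau `t`
through the corner cell at the end of row `r`; returns the resulting tableau
together with the letter that leaves the tableau. -/
def revInsert (t : List (List ℕ)) (r : ℕ) : List (List ℕ) × ℕ :=
  let row := t.getD r []
  let p := revInsertAux (t.take r) (row.getLastD 0)
  ((p.1 ++ [row.dropLast] ++ t.drop (r + 1)).filter (fun l => !l.isEmpty), p.2)

/-- A partition (as a list of row lengths) is a hook `(a,1,1,…,1)`. -/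
def IsHook (sh : List ℕ) : Prop := ∀ a ∈ sh.tail, a = 1

/-! Restricting a word to the letters in `[i, j]` and standardizing turns a Knuth move into
either the identity or a Knuth move, and it preserves inclusions of left inversion sets. Every
word is Knuth equivalent to the reading word of its insertion tableau, and (Knuth's theorem)
Knuth equivalent words without repeated letters have the same insertion tableau. Hence
`st(T_[i,j])` is the insertion tableau of the restriction of any word in the Knuth class of `T`,
so a pair `σ ≤ τ` witnessing a generating relation `S ≤ T` restricts to a pair witnessing
`st(S_[i,j]) ≤ st(T_[i,j])`.

Knuth's theorem is proved one row at a time: inserting the two sides of a Knuth move into a row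
produces the same row, and the two words of bumped letters are equal or again differ by a Knuth
move, which is then inserted into the remaining rows. -/

open List Relation

section RowInsertion

lemma insertRow_cons_of_lt {a h : ℕ} (rt : List ℕ) (ha : a < h) :
    insertRow (h :: rt) a = (a :: rt, some h) := by
  simp [insertRow, ha]

lemma insertRow_cons_of_gt {a h : ℕ} (rt : List ℕ) (ha : h < a) :
    insertRow (h :: rt) a = (h :: (insertRow rt a).1, (insertRow rt a).2) := by
  simp [insertRow, not_lt.2 ha.le]

lemma insertRow_snd_eq_none_iff {r : List ℕ} {a : ℕ} :
    (insertRow r a).2 = none ↔ ∀ e ∈ r, e ≤ a := by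
  induction r with
  | nil => simp [insertRow]
  | cons h rt ih =>
    rcases lt_or_ge a h with ha | ha
    · simp [insertRow, ha]
    · simp [insertRow, not_lt.2 ha, ih, ha]

lemma insertRow_snd_eq_some {r : List ℕ} {a c : ℕ} (hr : r.Pairwise (· < ·))
    (hc : (insertRow r a).2 = some c) : c ∈ r ∧ a < c ∧ ∀ e ∈ r, a < e → c ≤ e := by
  induction r with
  | nil => simp [insertRow] at hc
  | cons h rt ih =>
    rw [pairwise_cons] at hr
    rcases lt_or_ge a h with ha | ha
    · simp only [insertRow_cons_of_lt rt ha, Option.some.injEq] at hc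
      subst hc
      exact ⟨mem_cons_self, ha, by grind⟩
    · simp only [insertRow, not_lt.2 ha, if_false] at hc
      grind

lemma insertRow_perm (r : List ℕ) (a : ℕ) :
    (insertRow r a).1 ++ (insertRow r a).2.toList ~ a :: r := by
  induction r with
  | nil => simp [insertRow]
  | cons h rt ih =>
    rcases lt_or_ge a h with ha | ha
    · simp [insertRow_cons_of_lt rt ha]
    · simp only [insertRow, not_lt.2 ha, if_false, cons_append]
      exact (ih.cons h).trans (Perm.swap a h rt)

lemma insertRow_fst_pairwise {r : List ℕ} {a : ℕ} (hr : r.Pairwise (· < ·)) (ha : a ∉ r) :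
    (insertRow r a).1.Pairwise (· < ·) := by
  induction r with
  | nil => simp [insertRow]
  | cons h rt ih =>
    rw [pairwise_cons] at hr
    rcases lt_or_gt_of_ne (ne_of_not_mem_cons ha) with ha' | ha'
    · simp only [insertRow_cons_of_lt rt ha', pairwise_cons]
      exact ⟨fun e he => ha'.trans (hr.1 e he), hr.2⟩
    · simp only [insertRow_cons_of_gt rt ha', pairwise_cons]
      refine ⟨fun e he => ?_, ih hr.2 (not_mem_of_not_mem_cons ha)⟩
      have := (insertRow_perm rt a).subset (mem_append_left _ he)
      grind

lemma insertRow_fst_subset (r : List ℕ) (a : ℕ) : (insertRow r a).1 ⊆ a :: r :=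
  fun _ he => (insertRow_perm r a).subset (mem_append_left _ he)

lemma mem_insertRow_fst (r : List ℕ) (a : ℕ) : a ∈ (insertRow r a).1 := by
  induction r with
  | nil => simp [insertRow]
  | cons h rt ih =>
    by_cases ha : a < h
    · simp [insertRow_cons_of_lt rt ha]
    · simp [insertRow, ha, ih]

lemma insertRow_of_snd_eq_none {r : List ℕ} {x : ℕ} (h : (insertRow r x).2 = none) :
    insertRow r x = (r ++ [x], none) := by
  induction r with
  | nil => rfl
  | cons a r ih =>
    by_cases hxa : x < a
    · simp [insertRow, hxa] at h
    · simp only [insertRow, hxa, if_false] at h ⊢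
      simp [ih h]

lemma insertRow_of_snd_eq_some {r : List ℕ} {x c : ℕ} (h : (insertRow r x).2 = some c) :
    ∃ m b, r = m ++ c :: b ∧ (insertRow r x).1 = m ++ x :: b ∧ ∀ e ∈ m, e ≤ x := by
  induction r with
  | nil => simp [insertRow] at h
  | cons a r ih =>
    by_cases hxa : x < a
    · simp only [insertRow, hxa, if_true, Option.some.injEq] at h ⊢
      exact ⟨[], r, by simp [h], rfl, by simp⟩
    · simp only [insertRow, hxa, if_false] at h ⊢
      obtain ⟨m, b, rfl, hrow, hm⟩ := ih h
      exact ⟨a :: m, b, rfl, by simp [hrow], by simpa using ⟨not_lt.1 hxa, hm⟩⟩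

lemma not_mem_insertRow_fst {r : List ℕ} {a c : ℕ} (hr : r.Pairwise (· < ·)) (ha : a ∉ r)
    (hc : (insertRow r a).2 = some c) : c ∉ (insertRow r a).1 := by
  have hnd := (insertRow_perm r a).nodup_iff.2 (nodup_cons.2 ⟨ha, hr.nodup⟩)
  rw [hc, nodup_append] at hnd
  exact fun h => hnd.2.2 c h c (by simp) rfl

end RowInsertion

section RowWordInsertion

/-- The final row and the word of bumped letters when the letters of `w` are inserted into the
row `r` one after another. -/
def insertRowWord : List ℕ → List ℕ → List ℕ × List ℕ
  | r, [] => (r, [])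
  | r, a :: w =>
    ((insertRowWord (insertRow r a).1 w).1,
      (insertRow r a).2.toList ++ (insertRowWord (insertRow r a).1 w).2)

lemma insertTab_cons (r : List ℕ) (rs : List (List ℕ)) (x : ℕ) :
    insertTab (r :: rs) x = (insertRow r x).1 :: (insertRow r x).2.toList.foldl insertTab rs := by
  rcases hp : insertRow r x with ⟨r', _ | c⟩ <;> simp [insertTab, hp]

lemma foldl_insertTab_cons (r : List ℕ) (rs : List (List ℕ)) (w : List ℕ) :
    w.foldl insertTab (r :: rs) =
      (insertRowWord r w).1 :: (insertRowWord r w).2.foldl insertTab rs := by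
  induction w generalizing r rs with
  | nil => rfl
  | cons a w ih =>
    simp [insertRowWord, insertTab_cons, ih, foldl_append]

lemma insertRowWord_perm (r w : List ℕ) :
    (insertRowWord r w).1 ++ (insertRowWord r w).2 ~ w ++ r := by
  induction w generalizing r with
  | nil => simp [insertRowWord]
  | cons a w ih =>
    have h1 := ih (insertRow r a).1
    have h2 := insertRow_perm r a
    simp only [insertRowWord]
    rw [perm_iff_count] at h1 h2 ⊢
    intro e
    have := h1 e
    have := h2 e
    simp only [count_append, count_cons] at *
    omega

lemma insertRowWord_fst_pairwise {r w : List ℕ} (hr : r.Pairwise (· < ·))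
    (hw : (w ++ r).Nodup) : (insertRowWord r w).1.Pairwise (· < ·) := by
  induction w generalizing r with
  | nil => exact hr
  | cons a w ih =>
    rw [cons_append, nodup_cons, mem_append, not_or] at hw
    refine ih (insertRow_fst_pairwise hr hw.1.2) ?_
    have hperm := ((insertRow_perm r a).append_left w).trans perm_middle
    exact (hperm.nodup_iff.2 (nodup_cons.2 ⟨by simpa using hw.1, hw.2⟩)).sublist
      (by simpa only [append_assoc] using sublist_append_left (w ++ (insertRow r a).1) _)

lemma insertRowWord_fst_eq_of_perm {r s t : List ℕ} (hr : r.Pairwise (· < ·))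
    (hs : (s ++ r).Nodup) (ht : (t ++ r).Nodup) (hst : s ~ t)
    (hb : (insertRowWord r s).2 ~ (insertRowWord r t).2) :
    (insertRowWord r s).1 = (insertRowWord r t).1 := by
  refine Perm.eq_of_pairwise' (insertRowWord_fst_pairwise hr hs)
    (insertRowWord_fst_pairwise hr ht) ?_
  have := ((insertRowWord_perm r s).trans (hst.append_right r)).trans
    (insertRowWord_perm r t).symm
  exact perm_append_right_iff _ |>.1 (this.trans (hb.symm.append_left _))

lemma insertRowWord_cons_of_forall_gt {h : ℕ} {w : List ℕ} (rt : List ℕ)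
    (hw : ∀ a ∈ w, h < a) :
    insertRowWord (h :: rt) w = (h :: (insertRowWord rt w).1, (insertRowWord rt w).2) := by
  induction w generalizing rt with
  | nil => rfl
  | cons a w ih =>
    simp only [insertRowWord, insertRow_cons_of_gt rt (hw a mem_cons_self),
      ih _ (fun b hb => hw b (mem_cons_of_mem a hb))]

end RowWordInsertion

section KnuthEquivalence

/-- Strict inequalities suffice: only words without repeated letters occur. -/
inductive KnuthMove : List ℕ → List ℕ → Prop
  | xzy {x y z : ℕ} : x < y → y < z → KnuthMove [x, z, y] [z, x, y]
  | yxz {x y z : ℕ} : x < y → y < z → KnuthMove [y, x, z] [y, z, x]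

lemma KnuthMove.perm {s t : List ℕ} (h : KnuthMove s t) : s ~ t := by
  rcases h with ⟨-, -⟩ | ⟨-, -⟩
  · exact Perm.swap _ _ _
  · exact (Perm.swap _ _ _).cons _

def KnuthStep (u v : List ℕ) : Prop :=
  ∃ p s t q, KnuthMove s t ∧ u = p ++ s ++ q ∧ v = p ++ t ++ q

def KnuthEquiv : List ℕ → List ℕ → Prop := EqvGen KnuthStep

lemma KnuthMove.knuthEquiv {s t : List ℕ} (h : KnuthMove s t) (p q : List ℕ) :
    KnuthEquiv (p ++ s ++ q) (p ++ t ++ q) :=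
  EqvGen.rel _ _ ⟨p, s, t, q, h, rfl, rfl⟩

lemma KnuthEquiv.append {u v : List ℕ} (h : KnuthEquiv u v) (a b : List ℕ) :
    KnuthEquiv (a ++ u ++ b) (a ++ v ++ b) := by
  induction h with
  | rel u v h =>
    obtain ⟨p, s, t, q, hst, rfl, rfl⟩ := h
    simpa only [append_assoc] using hst.knuthEquiv (a ++ p) (q ++ b)
  | refl => exact EqvGen.refl _
  | symm _ _ _ ih => exact EqvGen.symm _ _ ih
  | trans _ _ _ _ _ ih₁ ih₂ => exact EqvGen.trans _ _ _ ih₁ ih₂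

lemma KnuthEquiv.perm {u v : List ℕ} (h : KnuthEquiv u v) : u ~ v := by
  induction h with
  | rel u v h =>
    obtain ⟨p, s, t, q, hst, rfl, rfl⟩ := h
    exact (hst.perm.append_left p).append_right q
  | refl => exact Perm.refl _
  | symm _ _ _ ih => exact ih.symm
  | trans _ _ _ _ _ ih₁ ih₂ => exact ih₁.trans ih₂

end KnuthEquivalence

section KnuthRow

variable {h x y z : ℕ} {rt : List ℕ}

lemma snd_insertRowWord_xzy_of_lt_head (hr : (h :: rt).Pairwise (· < ·)) (hxy : x < y)
    (hyz : y < z) (hzh : z < h) :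
    ReflGen (SymmGen KnuthMove) (insertRowWord (h :: rt) [x, z, y]).2
      (insertRowWord (h :: rt) [z, x, y]).2 := by
  have hxz := hxy.trans hyz
  have hxh := hxz.trans hzh
  cases rt with
  | nil =>
    have hs : (insertRowWord [h] [x, z, y]).2 = [h, z] := by
      simp [insertRowWord, insertRow, hxh, hyz, not_lt.2 hxz.le, not_lt.2 hxy.le]
    have ht : (insertRowWord [h] [z, x, y]).2 = [h, z] := by
      simp [insertRowWord, insertRow, hzh, hxz, not_lt.2 hxy.le]
    rw [hs, ht]
  | cons g rt =>
    have hhg : h < g := rel_of_pairwise_cons hr mem_cons_self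
    have hs : (insertRowWord (h :: g :: rt) [x, z, y]).2 = [h, g, z] := by
      simp [insertRowWord, insertRow, hxh, hyz, hzh.trans hhg, not_lt.2 hxz.le, not_lt.2 hxy.le]
    have ht : (insertRowWord (h :: g :: rt) [z, x, y]).2 = [h, z, g] := by
      simp [insertRowWord, insertRow, hzh, hxz, (hyz.trans hzh).trans hhg, not_lt.2 hxy.le]
    rw [hs, ht]
    exact ReflGen.single (Or.inr (KnuthMove.yxz hzh hhg))

lemma snd_insertRowWord_xzy_of_head_lt (hr : (h :: rt).Pairwise (· < ·)) (hxy : x < y)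
    (hyz : y < z) (hxh : x < h) (hhz : h < z) (hz : z ∉ rt) :
    ReflGen (SymmGen KnuthMove) (insertRowWord (h :: rt) [x, z, y]).2
      (insertRowWord (h :: rt) [z, x, y]).2 := by
  rw [pairwise_cons] at hr
  set R := (insertRow rt z).1
  have hs : (insertRowWord (h :: rt) [x, z, y]).2 =
      h :: ((insertRow rt z).2.toList ++ (insertRow R y).2.toList) := by
    simp [insertRowWord, insertRow_cons_of_lt _ hxh, insertRow_cons_of_gt _ (hxy.trans hyz),
      insertRow_cons_of_gt _ hxy, R]
  have ht : (insertRowWord (h :: rt) [z, x, y]).2 =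
      (insertRow rt z).2.toList ++ h :: (insertRow R y).2.toList := by
    simp [insertRowWord, insertRow_cons_of_lt _ hxh, insertRow_cons_of_gt _ hhz,
      insertRow_cons_of_gt _ hxy, R]
  rw [hs, ht]
  rcases hb : (insertRow rt z).2 with _ | β
  · exact ReflGen.refl
  obtain ⟨hβ, hzβ, -⟩ := insertRow_snd_eq_some hr.2 hb
  have hzR : z ∈ R := mem_insertRow_fst rt z
  obtain ⟨γ, hc⟩ : ∃ γ, (insertRow R y).2 = some γ := by
    refine Option.ne_none_iff_exists'.1 fun hc => ?_
    exact absurd (insertRow_snd_eq_none_iff.1 hc z hzR) (not_le.2 hyz)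
  obtain ⟨hγ, -, hγmin⟩ := insertRow_snd_eq_some (insertRow_fst_pairwise hr.2 hz) hc
  have hhγ : h < γ := by
    rcases mem_cons.1 (insertRow_fst_subset rt z hγ) with rfl | hγ
    exacts [hhz, hr.1 γ hγ]
  rw [hc]
  exact ReflGen.single (Or.inl (KnuthMove.xzy hhγ ((hγmin z hzR hyz).trans_lt hzβ)))

lemma snd_insertRowWord_yxz_of_lt_head (hr : (h :: rt).Pairwise (· < ·)) (hxy : x < y)
    (hyz : y < z) (hyh : y < h) :
    ReflGen (SymmGen KnuthMove) (insertRowWord (h :: rt) [y, x, z]).2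
      (insertRowWord (h :: rt) [y, z, x]).2 := by
  rw [pairwise_cons] at hr
  have hs : (insertRowWord (h :: rt) [y, x, z]).2 = h :: y :: (insertRow rt z).2.toList := by
    simp [insertRowWord, insertRow_cons_of_lt _ hyh, insertRow_cons_of_lt _ hxy,
      insertRow_cons_of_gt _ (hxy.trans hyz)]
  have ht : (insertRowWord (h :: rt) [y, z, x]).2 = h :: ((insertRow rt z).2.toList ++ [y]) := by
    simp [insertRowWord, insertRow_cons_of_lt _ hyh, insertRow_cons_of_gt _ hyz,
      insertRow_cons_of_lt _ hxy]
  rw [hs, ht]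
  rcases hb : (insertRow rt z).2 with _ | β
  · rfl
  obtain ⟨hβ, -, -⟩ := insertRow_snd_eq_some hr.2 hb
  exact ReflGen.single (Or.inl (KnuthMove.yxz hyh (hr.1 β hβ)))

lemma snd_insertRowWord_yxz_of_head_lt (hr : (h :: rt).Pairwise (· < ·)) (hxy : x < y)
    (hyz : y < z) (hxh : x < h) (hhy : h < y) (hy : y ∉ rt) :
    ReflGen (SymmGen KnuthMove) (insertRowWord (h :: rt) [y, x, z]).2
      (insertRowWord (h :: rt) [y, z, x]).2 := by
  rw [pairwise_cons] at hr
  set R₁ := (insertRow rt y).1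
  have hs : (insertRowWord (h :: rt) [y, x, z]).2 =
      (insertRow rt y).2.toList ++ h :: (insertRow R₁ z).2.toList := by
    simp [insertRowWord, insertRow_cons_of_gt _ hhy, insertRow_cons_of_lt _ hxh,
      insertRow_cons_of_gt _ (hxy.trans hyz), R₁]
  have ht : (insertRowWord (h :: rt) [y, z, x]).2 =
      (insertRow rt y).2.toList ++ (insertRow R₁ z).2.toList ++ [h] := by
    simp [insertRowWord, insertRow_cons_of_gt _ hhy, insertRow_cons_of_gt _ (hhy.trans hyz),
      insertRow_cons_of_lt _ hxh, R₁]
  rw [hs, ht]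
  rcases hc : (insertRow R₁ z).2 with _ | γ
  · simp only [Option.toList_none, append_nil]
    rfl
  obtain ⟨hγ, hzγ, -⟩ := insertRow_snd_eq_some (insertRow_fst_pairwise hr.2 hy) hc
  have hγrt : γ ∈ rt := by
    rcases mem_cons.1 (insertRow_fst_subset rt y hγ) with rfl | hγ
    exacts [absurd hzγ (not_lt.2 hyz.le), hγ]
  rcases hb : (insertRow rt y).2 with _ | β
  · exact absurd (insertRow_snd_eq_none_iff.1 hb γ hγrt) (not_le.2 (hyz.trans hzγ))
  obtain ⟨hβ, -, hβmin⟩ := insertRow_snd_eq_some hr.2 hb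
  have hβγ : β < γ := lt_of_le_of_ne (hβmin γ hγrt (hyz.trans hzγ))
    (fun he => not_mem_insertRow_fst hr.2 hy hb (he ▸ hγ))
  exact ReflGen.single (Or.inl (KnuthMove.yxz (hr.1 β hβ) hβγ))

theorem KnuthMove.reflGen_snd_insertRowWord {r s t : List ℕ} (hst : KnuthMove s t)
    (hr : r.Pairwise (· < ·)) (hs : ∀ a ∈ s, a ∉ r) :
    ReflGen (SymmGen KnuthMove) (insertRowWord r s).2 (insertRowWord r t).2 := by
  induction r with
  | nil =>
    rcases hst with @⟨x, y, z, hxy, hyz⟩ | @⟨x, y, z, hxy, hyz⟩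
    · rw [show (insertRowWord [] [x, z, y]).2 = (insertRowWord [] [z, x, y]).2 by
        simp [insertRowWord, insertRow, hyz, hxy.trans hyz, not_lt.2 hxy.le,
          not_lt.2 (hxy.trans hyz).le]]
    · rw [show (insertRowWord [] [y, x, z]).2 = (insertRowWord [] [y, z, x]).2 by
        simp [insertRowWord, insertRow, hxy, not_lt.2 hyz.le, not_lt.2 (hxy.trans hyz).le]]
  | cons h rt ih =>
    have hs' : ∀ a ∈ s, a ≠ h ∧ a ∉ rt := fun a ha => not_or.1 (hs a ha ∘ mem_cons.2)
    have peel (hst' : KnuthMove s t) (hhs : ∀ a ∈ s, h < a) :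
        ReflGen (SymmGen KnuthMove) (insertRowWord (h :: rt) s).2
          (insertRowWord (h :: rt) t).2 := by
      rw [insertRowWord_cons_of_forall_gt rt hhs,
        insertRowWord_cons_of_forall_gt rt fun a ha => hhs a (hst'.perm.mem_iff.2 ha)]
      exact ih hr.of_cons fun a ha => (hs' a ha).2
    rcases hst with @⟨x, y, z, hxy, hyz⟩ | @⟨x, y, z, hxy, hyz⟩
    · obtain ⟨hxh, -⟩ := hs' x (by simp)
      obtain ⟨hzh, hzrt⟩ := hs' z (by simp)
      rcases lt_or_gt_of_ne hxh with hxh | hhx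
      · rcases lt_or_gt_of_ne hzh with hzh | hhz
        · exact snd_insertRowWord_xzy_of_lt_head hr hxy hyz hzh
        · exact snd_insertRowWord_xzy_of_head_lt hr hxy hyz hxh hhz hzrt
      · exact peel (.xzy hxy hyz) (by simp; omega)
    · obtain ⟨hxh, -⟩ := hs' x (by simp)
      obtain ⟨hyh, hyrt⟩ := hs' y (by simp)
      rcases lt_or_gt_of_ne hxh with hxh | hhx
      · rcases lt_or_gt_of_ne hyh with hyh | hhy
        · exact snd_insertRowWord_yxz_of_lt_head hr hxy hyz hyh
        · exact snd_insertRowWord_yxz_of_head_lt hr hxy hyz hxh hhy hyrt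
      · exact peel (.yxz hxy hyz) (by simp; omega)

end KnuthRow

section KnuthTableau

lemma nodup_snd_insertRowWord_append {r w L : List ℕ} (h : (w ++ r ++ L).Nodup) :
    ((insertRowWord r w).2 ++ L).Nodup := by
  have := (((insertRowWord_perm r w).append_right L).nodup_iff.2 h)
  rw [append_assoc] at this
  exact this.sublist (sublist_append_right _ _)

lemma perm_of_reflGen_knuthMove {s t : List ℕ} (h : ReflGen (SymmGen KnuthMove) s t) :
    s ~ t := by
  rcases h with _ | h | h
  exacts [Perm.refl s, h.perm, h.perm.symm]

theorem KnuthMove.foldl_insertTab_eq {s t : List ℕ} (hst : KnuthMove s t) {T : List (List ℕ)}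
    (hT : ∀ r ∈ T, r.Pairwise (· < ·)) (hs : (s ++ T.flatten).Nodup) :
    s.foldl insertTab T = t.foldl insertTab T := by
  induction T generalizing s t with
  | nil =>
    rcases hst with @⟨x, y, z, hxy, hyz⟩ | @⟨x, y, z, hxy, hyz⟩
    · simp [insertTab, insertRow, hyz, hxy.trans hyz, not_lt.2 hxy.le,
        not_lt.2 (hxy.trans hyz).le]
    · simp [insertTab, insertRow, hxy, not_lt.2 hyz.le, not_lt.2 (hxy.trans hyz).le]
  | cons r rs ih =>
    have hr := hT r mem_cons_self
    have hs' : (s ++ r ++ rs.flatten).Nodup := by simpa using hs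
    have ht' : (t ++ r ++ rs.flatten).Nodup :=
      ((hst.perm.append_right r).append_right _).nodup_iff.1 hs'
    have hb := hst.reflGen_snd_insertRowWord hr
      fun a ha har => disjoint_of_nodup_append (hs'.sublist (sublist_append_left _ _)) ha har
    rw [foldl_insertTab_cons, foldl_insertTab_cons,
      insertRowWord_fst_eq_of_perm hr (hs'.sublist (sublist_append_left _ _))
        (ht'.sublist (sublist_append_left _ _)) hst.perm (perm_of_reflGen_knuthMove hb)]
    have hrs : ∀ r ∈ rs, r.Pairwise (· < ·) := fun r' hr' => hT r' (mem_cons_of_mem r hr')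
    rcases reflGen_iff _ _ _ |>.1 hb with hb | hb | hb
    · rw [hb]
    · rw [ih hb hrs (nodup_snd_insertRowWord_append hs')]
    · rw [ih hb hrs (nodup_snd_insertRowWord_append ht')]

end KnuthTableau

section InsertionTableau

lemma insertTab_invariants {T : List (List ℕ)} {x : ℕ} (hT : ∀ r ∈ T, r.Pairwise (· < ·))
    (hx : (x :: T.flatten).Nodup) :
    (∀ r ∈ insertTab T x, r.Pairwise (· < ·)) ∧
      (insertTab T x).flatten ~ x :: T.flatten := by
  induction T generalizing x with
  | nil => simp [insertTab]
  | cons r rs ih =>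
    have hr := hT r mem_cons_self
    have hrs : ∀ r ∈ rs, r.Pairwise (· < ·) := fun r' hr' => hT r' (mem_cons_of_mem r hr')
    rw [flatten_cons, ← cons_append] at hx
    have hxr : x ∉ r := fun h => (nodup_cons.1 (hx.sublist (sublist_append_left _ _))).1 h
    have hrow := insertRow_fst_pairwise hr hxr
    have hperm := insertRow_perm r x
    rw [insertTab_cons, flatten_cons]
    rcases hb : (insertRow r x).2 with _ | c
    · rw [hb, Option.toList_none, append_nil] at hperm
      exact ⟨by simpa [hrow] using hrs, by simpa using hperm.append_right rs.flatten⟩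
    · rw [hb] at hperm
      have hc : (c :: rs.flatten).Nodup := by
        have := (hperm.symm.append_right rs.flatten).nodup_iff.1 hx
        exact this.sublist (by simp)
      obtain ⟨ih₁, ih₂⟩ := ih hrs hc
      refine ⟨by simpa [hrow] using ih₁, ?_⟩
      simp only [Option.toList_some, foldl_cons, foldl_nil]
      calc (insertRow r x).1 ++ (insertTab rs c).flatten
          ~ (insertRow r x).1 ++ c :: rs.flatten := ih₂.append_left _
        _ = ((insertRow r x).1 ++ [c]) ++ rs.flatten := by simp
        _ ~ x :: r ++ rs.flatten := hperm.append_right _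

lemma RSK_append (u v : List ℕ) : RSK (u ++ v) = v.foldl insertTab (RSK u) :=
  foldl_append

lemma RSK_append_singleton (w : List ℕ) (a : ℕ) : RSK (w ++ [a]) = insertTab (RSK w) a :=
  RSK_append w [a]

lemma RSK_invariants {w : List ℕ} (hw : w.Nodup) :
    (∀ r ∈ RSK w, r.Pairwise (· < ·)) ∧ (RSK w).flatten ~ w := by
  induction w using reverseRecOn with
  | nil => simp [RSK]
  | append_singleton w a ih =>
    rw [nodup_append] at hw
    obtain ⟨ih₁, ih₂⟩ := ih hw.1
    have ha : (a :: (RSK w).flatten).Nodup :=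
      nodup_cons.2 ⟨fun h => hw.2.2 a (ih₂.subset h) a (by simp) rfl, ih₂.nodup_iff.2 hw.1⟩
    obtain ⟨h₁, h₂⟩ := insertTab_invariants ih₁ ha
    rw [RSK_append_singleton]
    exact ⟨h₁, h₂.trans ((ih₂.cons a).trans (perm_append_singleton a w).symm)⟩

theorem RSK_eq_of_knuthEquiv {u v : List ℕ} (h : KnuthEquiv u v) (hu : u.Nodup) :
    RSK u = RSK v := by
  induction h with
  | rel u v h =>
    obtain ⟨p, s, t, q, hst, rfl, rfl⟩ := h
    obtain ⟨hsorted, hperm⟩ := RSK_invariants (hu.sublist (by simp : p <+ p ++ s ++ q))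
    have hs : (s ++ (RSK p).flatten).Nodup :=
      (perm_append_comm.trans (hperm.append_right s)).nodup_iff.2
        (hu.sublist (by simp : p ++ s <+ p ++ s ++ q))
    rw [RSK_append, RSK_append, RSK_append, RSK_append, hst.foldl_insertTab_eq hsorted hs]
  | refl => rfl
  | symm u v huv ih => exact (ih (KnuthEquiv.perm huv |>.nodup_iff.2 hu)).symm
  | trans u v w huv _ ih₁ ih₂ =>
    exact (ih₁ hu).trans (ih₂ (KnuthEquiv.perm huv |>.nodup_iff.1 hu))

end InsertionTableau

section ReadingWord

lemma knuthEquiv_cons_append_singleton {v x : ℕ} {b : List ℕ} (hb : (v :: b).Pairwise (· < ·))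
    (hxv : x < v) : KnuthEquiv (v :: b ++ [x]) (v :: x :: b) := by
  induction b generalizing v with
  | nil => exact EqvGen.refl _
  | cons e b ih =>
    have hve : v < e := rel_of_pairwise_cons hb mem_cons_self
    have h₁ := (ih hb.of_cons (hxv.trans hve)).append [v] []
    have h₂ := (KnuthMove.yxz hxv hve).knuthEquiv [] b
    simp only [append_nil, nil_append, cons_append] at h₁ h₂ ⊢
    exact EqvGen.trans _ _ _ h₁ (EqvGen.symm _ _ h₂)

lemma knuthEquiv_append_cons_cons {m b : List ℕ} {c y : ℕ} (hm : m.Pairwise (· < ·))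
    (hmy : ∀ e ∈ m, e < y) (hyc : y < c) :
    KnuthEquiv (m ++ c :: y :: b) (c :: (m ++ y :: b)) := by
  induction m using reverseRecOn generalizing y b with
  | nil => exact EqvGen.refl _
  | append_singleton m e ih =>
    rw [pairwise_append] at hm
    have hey : e < y := hmy e (by simp)
    have h₁ := (KnuthMove.xzy hey hyc).knuthEquiv m b
    have h₂ := ih (b := y :: b) hm.1 (fun a ha => hm.2.2 a ha e (by simp)) (hey.trans hyc)
    simp only [append_assoc, cons_append, nil_append] at h₁ h₂ ⊢
    exact EqvGen.trans _ _ _ h₁ h₂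

lemma knuthEquiv_append_singleton_of_insertRow {r : List ℕ} {x c : ℕ}
    (hr : r.Pairwise (· < ·)) (hx : x ∉ r) (hc : (insertRow r x).2 = some c) :
    KnuthEquiv (r ++ [x]) (c :: (insertRow r x).1) := by
  obtain ⟨m, b, rfl, hrow, hm⟩ := insertRow_of_snd_eq_some hc
  obtain ⟨-, hxc, -⟩ := insertRow_snd_eq_some hr hc
  rw [pairwise_append] at hr
  have hmx : ∀ e ∈ m, e < x := fun e he => lt_of_le_of_ne (hm e he) (by grind)
  have h₁ := (knuthEquiv_cons_append_singleton hr.2.1 hxc).append m []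
  have h₂ := knuthEquiv_append_cons_cons hr.1 hmx hxc (b := b)
  rw [hrow]
  simp only [append_assoc, append_nil, cons_append] at h₁ h₂ ⊢
  exact EqvGen.trans _ _ _ h₁ h₂

lemma readWord_cons (r : List ℕ) (rs : List (List ℕ)) :
    readWord (r :: rs) = readWord rs ++ r := by
  simp [readWord]

lemma knuthEquiv_readWord_insertTab {T : List (List ℕ)} {x : ℕ}
    (hT : ∀ r ∈ T, r.Pairwise (· < ·)) (hx : (x :: T.flatten).Nodup) :
    KnuthEquiv (readWord T ++ [x]) (readWord (insertTab T x)) := by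
  induction T generalizing x with
  | nil => exact EqvGen.refl _
  | cons r rs ih =>
    have hr := hT r mem_cons_self
    rw [flatten_cons, ← cons_append] at hx
    have hxr : x ∉ r := fun h => (nodup_cons.1 (hx.sublist (sublist_append_left _ _))).1 h
    rw [insertTab_cons, readWord_cons, readWord_cons]
    rcases hb : (insertRow r x).2 with _ | c
    · rw [(insertRow_of_snd_eq_none hb), append_assoc]
      exact EqvGen.refl _
    · have hc : (c :: rs.flatten).Nodup := by
        have := ((insertRow_perm r x).symm.append_right rs.flatten).nodup_iff.1 hx
        exact this.sublist (by simp [hb])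
      have h₁ := (knuthEquiv_append_singleton_of_insertRow hr hxr hb).append (readWord rs) []
      have h₂ :=
        (ih (fun r' hr' => hT r' (mem_cons_of_mem r hr')) hc).append [] (insertRow r x).1
      simp only [append_assoc, append_nil, nil_append, cons_append,
        Option.toList_some, foldl_cons, foldl_nil] at h₁ h₂ ⊢
      exact EqvGen.trans _ _ _ h₁ h₂

theorem knuthEquiv_readWord_RSK {w : List ℕ} (hw : w.Nodup) :
    KnuthEquiv w (readWord (RSK w)) := by
  induction w using reverseRecOn with
  | nil => exact EqvGen.refl _
  | append_singleton w a ih =>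
    have hw' := hw.sublist (sublist_append_left w [a])
    obtain ⟨hsorted, hperm⟩ := RSK_invariants hw'
    have ha : (a :: (RSK w).flatten).Nodup :=
      (perm_append_singleton a w).nodup_iff.1 hw |> (hperm.cons a).nodup_iff.2
    rw [RSK_append_singleton]
    exact EqvGen.trans _ _ _ ((ih hw').append [] [a]) (knuthEquiv_readWord_insertTab hsorted ha)

end ReadingWord

section Restriction

lemma restr_append (u v : List ℕ) (i j : ℕ) :
    restr (u ++ v) i j = restr u i j ++ restr v i j := by
  simp [restr]

lemma restr_nodup {w : List ℕ} (hw : w.Nodup) (i j : ℕ) : (restr w i j).Nodup := by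
  refine (hw.filter _).map_on fun a ha b hb hab => ?_
  simp only [mem_filter, decide_eq_true_eq] at ha hb
  omega

lemma KnuthMove.restr {s t : List ℕ} (h : KnuthMove s t) (i j : ℕ) :
    restr s i j = restr t i j ∨ KnuthMove (restr s i j) (restr t i j) := by
  -- If `x` and `z` lie in `[i, j]` then so does `y` and the move survives; otherwise the
  -- restricted words coincide.
  rcases h with @⟨x, y, z, hxy, hyz⟩ | @⟨x, y, z, hxy, hyz⟩ <;>
  by_cases hx : i ≤ x ∧ x ≤ j <;> by_cases hz : i ≤ z ∧ z ≤ j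
  all_goals try (left; simp [_root_.restr, filter_cons, hx, hz]; done)
  all_goals
    right
    have hy : i ≤ y ∧ y ≤ j := by omega
    simp only [_root_.restr, filter_cons, hx, hy, hz, and_self, decide_true, if_true, filter_nil,
      map_cons, map_nil]
  exacts [.xzy (by omega) (by omega), .yxz (by omega) (by omega)]

lemma KnuthEquiv.restr {u v : List ℕ} (h : KnuthEquiv u v) (i j : ℕ) :
    KnuthEquiv (restr u i j) (restr v i j) := by
  induction h with
  | rel u v h =>
    obtain ⟨p, s, t, q, hst, rfl, rfl⟩ := h
    simp only [restr_append]
    rcases hst.restr i j with he | hst'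
    · rw [he]
      exact EqvGen.refl _
    · exact hst'.knuthEquiv _ _
  | refl => exact EqvGen.refl _
  | symm _ _ _ ih => exact EqvGen.symm _ _ ih
  | trans _ _ _ _ _ ih₁ ih₂ => exact EqvGen.trans _ _ _ ih₁ ih₂

theorem RSK_restr {w : List ℕ} (hw : w.Nodup) (i j : ℕ) :
    RSK (restr w i j) = restrTab (RSK w) i j :=
  RSK_eq_of_knuthEquiv ((knuthEquiv_readWord_RSK hw).restr i j) (restr_nodup hw i j)

end Restriction

section Inversions

lemma pair_sublist_iff_idxOf_lt {α : Type*} [BEq α] [LawfulBEq α] {l : List α} (hl : l.Nodup)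
    {a b : α} (ha : a ∈ l) (hb : b ∈ l) : [a, b] <+ l ↔ l.idxOf a < l.idxOf b := by
  induction l with
  | nil => simp at ha
  | cons c l ih =>
    rw [nodup_cons] at hl
    rcases mem_cons.1 ha with rfl | ha'
    · grind
    rcases mem_cons.1 hb with rfl | hb'
    · grind
    have hac : a ≠ c := by grind
    have hbc : b ≠ c := by grind
    rw [idxOf_cons_ne l (Ne.symm hac), idxOf_cons_ne l (Ne.symm hbc), Nat.succ_lt_succ_iff,
      ← ih hl.2 ha' hb', sublist_cons_iff]
    grind

lemma mem_InvL_iff {w : List ℕ} (hw : w.Nodup) {a b : ℕ} :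
    (a, b) ∈ InvL w ↔ a < b ∧ [b, a] <+ w := by
  refine ⟨fun ⟨hab, ha, hb, hba⟩ => ⟨hab, (pair_sublist_iff_idxOf_lt hw hb ha).2 hba⟩,
    fun ⟨hab, hba⟩ => ?_⟩
  have hb : b ∈ w := hba.subset (by simp)
  have ha : a ∈ w := hba.subset (by simp)
  exact ⟨hab, ha, hb, (pair_sublist_iff_idxOf_lt hw hb ha).1 hba⟩

lemma map_add_restr (w : List ℕ) (i j : ℕ) :
    (restr w i j).map (· + (i - 1)) = w.filter fun x => decide (i ≤ x ∧ x ≤ j) := by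
  rw [restr, List.map_map]
  conv_rhs => rw [← map_id (filter _ w)]
  refine map_congr_left fun x hx => ?_
  simp only [mem_filter, decide_eq_true_eq] at hx
  simp only [Function.comp_apply, id_eq]
  omega

lemma pair_sublist_restr_iff {w : List ℕ} {i j A B : ℕ} (hA : i ≤ A ∧ A ≤ j)
    (hB : i ≤ B ∧ B ≤ j) : [A - (i - 1), B - (i - 1)] <+ restr w i j ↔ [A, B] <+ w := by
  constructor
  · intro h
    have := h.map (· + (i - 1))
    rw [map_add_restr] at this
    simpa [Nat.sub_add_cancel (hA.1.trans' (Nat.sub_le i 1)),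
      Nat.sub_add_cancel (hB.1.trans' (Nat.sub_le i 1))] using this.trans filter_sublist
  · intro h
    have := (h.filter fun x => decide (i ≤ x ∧ x ≤ j)).map (· - (i - 1))
    simpa [restr, hA, hB] using this

lemma exists_of_mem_restr {w : List ℕ} {i j c : ℕ} (hc : c ∈ restr w i j) :
    ∃ C, (i ≤ C ∧ C ≤ j) ∧ c = C - (i - 1) := by
  simp only [restr, mem_map, mem_filter, decide_eq_true_eq] at hc
  obtain ⟨C, ⟨-, hCij⟩, rfl⟩ := hc
  exact ⟨C, hCij, rfl⟩

theorem wordLE_restr {σ τ : List ℕ} (hσ : σ.Nodup) (hτ : τ.Nodup) (h : wordLE σ τ)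
    (i j : ℕ) : wordLE (restr σ i j) (restr τ i j) := by
  rintro ⟨a, b⟩ hab
  obtain ⟨hab, hba⟩ := (mem_InvL_iff (restr_nodup hσ i j)).1 hab
  obtain ⟨A, hA, rfl⟩ := exists_of_mem_restr (hba.subset (by simp : a ∈ [b, a]))
  obtain ⟨B, hB, rfl⟩ := exists_of_mem_restr (hba.subset (by simp : b ∈ [b, _]))
  rw [pair_sublist_restr_iff hB hA] at hba
  have hinv := h ((mem_InvL_iff hσ).2 ⟨by omega, hba⟩)
  exact (mem_InvL_iff (restr_nodup hτ i j)).2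
    ⟨hab, (pair_sublist_restr_iff hB hA).2 ((mem_InvL_iff hτ).1 hinv).2⟩

end Inversions

section WeakOrder

lemma isPermWord_restr {n i j : ℕ} {σ : List ℕ} (hσ : IsPermWord n σ) (hi : 1 ≤ i)
    (hij : i ≤ j) (hj : j ≤ n) : IsPermWord (j - i + 1) (restr σ i j) := by
  refine (perm_ext_iff_of_nodup (restr_nodup (hσ.nodup_iff.2 nodup_range') i j)
    nodup_range').2 fun a => ?_
  simp only [restr, mem_map, mem_filter, decide_eq_true_eq, hσ.mem_iff, mem_range'_1]
  constructor
  · rintro ⟨A, ⟨-, hA⟩, rfl⟩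
    omega
  · intro ha
    exact ⟨a + (i - 1), ⟨by omega, by omega⟩, by omega⟩

theorem tabRel_restr {n i j : ℕ} {S T : List (List ℕ)} (h : tabRel n S T) (hi : 1 ≤ i)
    (hij : i ≤ j) (hj : j ≤ n) : tabRel (j - i + 1) (restrTab S i j) (restrTab T i j) := by
  obtain ⟨σ, τ, hσ, hτ, rfl, rfl, hστ⟩ := h
  have hσ' := hσ.nodup_iff.2 nodup_range'
  have hτ' := hτ.nodup_iff.2 nodup_range'
  exact ⟨restr σ i j, restr τ i j, isPermWord_restr hσ hi hij hj,
    isPermWord_restr hτ hi hij hj, RSK_restr hσ' i j, RSK_restr hτ' i j,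
    wordLE_restr hσ' hτ' hστ i j⟩

end WeakOrder

theorem weak_order_restricts_to_segments_general (n : ℕ) (S T : List (List ℕ))
    (h : tabLE n S T) :
    ∀ i j : ℕ, 1 ≤ i → i < j → j ≤ n →
      tabLE (j - i + 1) (restrTab S i j) (restrTab T i j) := by
  intro i j hi hij hj
  induction h with
  | single hST => exact .single (tabRel_restr hST hi hij.le hj)
  | tail _ hST ih => exact ih.tail (tabRel_restr hST hi hij.le hj)

/-- The weak order on `SYT_n` restricts to segments: `S ≤_weak T` implies
`st(S_[i,j]) ≤_weak st(T_[i,j])` in `SYT_{j-i+1}` for all `1 ≤ i < j ≤ n`. -/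
theorem weak_order_restricts_to_segments (n : ℕ) (S T : List (List ℕ))
    (hS : IsSYT n S) (hT : IsSYT n T) (h : tabLE n S T) :
    ∀ i j : ℕ, 1 ≤ i → i < j → j ≤ n →
      tabLE (j - i + 1) (restrTab S i j) (restrTab T i j) :=
  weak_order_restricts_to_segments_general n S T h
end

section
/- The relation defining the weak order on SYT_n is not transitive before taking transitive closure: for the tableaux R with rows (1,2,5),(3,4), S with rows (1,4,5),(2),(3), and T with rows (1,4),(2,5),(3) in SYT_5, one has R <_weak S (since 34125 ≤_weak 34215 with I(34125)=R, I(34215)=S) and S <_weak T (since 32145 ≤_weak 32154 with I(32145)=S, I(32154)=T), hence R <_weak T; yet for every ρ ∈ Y_R and every τ ∈ Y_T, the pair (2,4) lies in Inv_L(ρ) but not in Inv_L(τ), so there exist no ρ ∈ Y_R and τ ∈ Y_T with ρ ≤_weak τ. -/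
/-! Knuth classes in `S_5` are finite, so whether `(2,4)` is an inversion of every word of
`Y_R`, resp. of none of `Y_T`, is decided by running RSK on all 120 permutations. A pair
that is an inversion throughout `Y_R` and nowhere in `Y_T` forbids `ρ ≤ τ`, because going up
in the weak order only adds inversions. -/

instance (w : List ℕ) (p : ℕ × ℕ) : Decidable (p ∈ InvL w) :=
  inferInstanceAs (Decidable (p.1 < p.2 ∧ p.1 ∈ w ∧ p.2 ∈ w ∧ w.idxOf p.2 < w.idxOf p.1))

instance (n : ℕ) (w : List ℕ) : Decidable (IsPermWord n w) :=
  inferInstanceAs (Decidable (w.Perm (List.range' 1 n)))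

theorem wordLE_iff_forall_mem {u w : List ℕ} :
    wordLE u w ↔ ∀ a ∈ u, ∀ b ∈ u, (a, b) ∈ InvL u → (a, b) ∈ InvL w :=
  ⟨fun h _ _ _ _ hab => h hab, fun h p hp => h p.1 hp.2.1 p.2 hp.2.2.1 hp⟩

instance : DecidableRel wordLE := fun _ _ => decidable_of_iff' _ wordLE_iff_forall_mem

theorem forall_isPermWord_iff {n : ℕ} {P : List ℕ → Prop} :
    (∀ w, IsPermWord n w → P w) ↔ ∀ w ∈ (List.range' 1 n).permutations', P w := by
  simp only [List.mem_permutations']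
  rfl

theorem not_tabRel_of_separating_inversion {n : ℕ} {R T : List (List ℕ)} (p : ℕ × ℕ)
    (hR : ∀ ρ, IsPermWord n ρ → RSK ρ = R → p ∈ InvL ρ)
    (hT : ∀ τ, IsPermWord n τ → RSK τ = T → p ∉ InvL τ) : ¬ tabRel n R T :=
  fun ⟨ρ, τ, hρ, hτ, hρR, hτT, hle⟩ => hT τ hτ hτT (hle (hR ρ hρ hρR))

set_option maxRecDepth 40000 in
theorem mem_invL_of_RSK_eq_rows_125_34 :
    ∀ ρ, IsPermWord 5 ρ → RSK ρ = [[1,2,5],[3,4]] → ((2, 4) : ℕ × ℕ) ∈ InvL ρ :=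
  forall_isPermWord_iff.2 (by decide)

set_option maxRecDepth 40000 in
theorem not_mem_invL_of_RSK_eq_rows_14_25_3 :
    ∀ τ, IsPermWord 5 τ → RSK τ = [[1,4],[2,5],[3]] → ((2, 4) : ℕ × ℕ) ∉ InvL τ :=
  forall_isPermWord_iff.2 (by decide)

/-- The relation generating the weak order on `SYT_5` is not
transitive before taking transitive closure: with `R`, `S`, `T` as below,
`R ≤ S` (via `34125 ≤_weak 34215`) and `S ≤ T` (via `32145 ≤_weak 32154`), hence
`R <_weak T` in the transitive closure; yet every `ρ ∈ Y_R` has the inversion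
`(2,4)` while no `τ ∈ Y_T` does, so no `ρ ∈ Y_R`, `τ ∈ Y_T` satisfy `ρ ≤_weak τ`. -/
theorem weak_order_needs_transitive_closure :
    RSK [3,4,1,2,5] = [[1,2,5],[3,4]] ∧
    RSK [3,4,2,1,5] = [[1,4,5],[2],[3]] ∧
    wordLE [3,4,1,2,5] [3,4,2,1,5] ∧
    RSK [3,2,1,4,5] = [[1,4,5],[2],[3]] ∧
    RSK [3,2,1,5,4] = [[1,4],[2,5],[3]] ∧
    wordLE [3,2,1,4,5] [3,2,1,5,4] ∧
    tabLE 5 [[1,2,5],[3,4]] [[1,4],[2,5],[3]] ∧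
    (∀ ρ : List ℕ, IsPermWord 5 ρ → RSK ρ = [[1,2,5],[3,4]] →
      ((2, 4) : ℕ × ℕ) ∈ InvL ρ) ∧
    (∀ τ : List ℕ, IsPermWord 5 τ → RSK τ = [[1,4],[2,5],[3]] →
      ((2, 4) : ℕ × ℕ) ∉ InvL τ) ∧
    ¬ ∃ ρ τ : List ℕ, IsPermWord 5 ρ ∧ IsPermWord 5 τ ∧
        RSK ρ = [[1,2,5],[3,4]] ∧ RSK τ = [[1,4],[2,5],[3]] ∧ wordLE ρ τ := by
  have hRS : wordLE [3,4,1,2,5] [3,4,2,1,5] := by decide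
  have hST : wordLE [3,2,1,4,5] [3,2,1,5,4] := by decide
  have hR := mem_invL_of_RSK_eq_rows_125_34
  have hT := not_mem_invL_of_RSK_eq_rows_14_25_3
  refine ⟨rfl, rfl, hRS, rfl, rfl, hST, ?_, hR, hT, not_tabRel_of_separating_inversion _ hR hT⟩
  exact .tail (.single ⟨[3,4,1,2,5], [3,4,2,1,5], by decide, by decide, rfl, rfl, hRS⟩)
    ⟨[3,2,1,4,5], [3,2,1,5,4], by decide, by decide, rfl, rfl, hST⟩
end
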